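/- Let g(p) = p + a p^α with a ≥ 0 and 0 < α < 1. Define f(t) = 1 + 2 c₀ a t^{1−α}/Γ(2−α) + c₀² a² t^{2(1−α)}/Γ(3−2α) for t > 0 and c₀ > 0. Then f′ is completely monotone on (0,∞) (i.e. f is a Bernstein function) if and only if 1/2 ≤ α < 1. -/

import Mathlib

/-!
On `(0, ∞)`, `f = 1 + A t^{1-α} + B t^{2(1-α)}` with `A, B > 0`, and
`(t^r)^{(k+1)} = r(r-1)⋯(r-k) t^{r-k-1}`. For `0 ≤ r ≤ 1` the sign is right for complete
monotonicity of `(t^r)'`, since `(-1)^k r(r-1)⋯(r-k) = r(1-r)(2-r)⋯(k-r) ≥ 0`; for `α ≥ 1/2` both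
exponents `1-α` and `2(1-α)` lie in `[0, 1]`. For `α < 1/2` the case `k = 1` fails:
`-f''(t) = A α(1-α) t^{-1-α} - B (2-2α)(1-2α) t^{-2α}` is negative for large `t`, because
`t^{-2α}` decays more slowly than `t^{-1-α}`.
-/

open Real Filter Polynomial Set

lemma ascPochhammer_eval_nonneg {S : Type*} [Semiring S] [PartialOrder S] [IsStrictOrderedRing S]
    (n : ℕ) {s : S} (hs : 0 ≤ s) : 0 ≤ (ascPochhammer S n).eval s := by
  rcases hs.eq_or_lt with rfl | hs
  · rw [ascPochhammer_eval_zero]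
    split_ifs <;> simp
  · exact (ascPochhammer_pos n s hs).le

lemma neg_one_pow_mul_descPochhammer_succ_eval_nonneg (k : ℕ) {r : ℝ} (hr₀ : 0 ≤ r)
    (hr₁ : r ≤ 1) : 0 ≤ (-1) ^ k * (descPochhammer ℝ (k + 1)).eval r := by
  rw [descPochhammer_succ_left, eval_mul, eval_X, eval_comp, eval_sub, eval_X, eval_one,
    mul_left_comm, ← ascPochhammer_eval_neg_eq_descPochhammer, neg_sub]
  exact mul_nonneg hr₀ (ascPochhammer_eval_nonneg k (sub_nonneg.2 hr₁))

lemma iteratedDeriv_rpow_const (k : ℕ) (r x : ℝ) :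
    iteratedDeriv k (fun x : ℝ => x ^ r) x = (descPochhammer ℝ k).eval r * x ^ (r - k) := by
  rw [iteratedDeriv_eq_iterate, iter_deriv_rpow_const]

lemma iteratedDeriv_const_add_mul_rpow_add_mul_rpow {k : ℕ} (hk : 0 < k) (c A B r s : ℝ)
    {t : ℝ} (ht : t ≠ 0) :
    iteratedDeriv k (fun x => c + A * x ^ r + B * x ^ s) t =
      A * (descPochhammer ℝ k).eval r * t ^ (r - k) +
        B * (descPochhammer ℝ k).eval s * t ^ (s - k) := by
  simp_rw [add_assoc]
  rw [iteratedDeriv_const_add hk, iteratedDeriv_fun_add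
    (contDiffAt_const.mul (contDiffAt_rpow_const_of_ne ht))
    (contDiffAt_const.mul (contDiffAt_rpow_const_of_ne ht))]
  simp only [iteratedDeriv_const_mul_field, iteratedDeriv_rpow_const, mul_assoc]

lemma exists_pos_mul_rpow_lt_mul_rpow (p : ℝ) {q u v : ℝ} (hq : 0 < q) (huv : u < v) :
    ∃ t > 0, p * t ^ u < q * t ^ v := by
  obtain ⟨t, hpt, ht⟩ := (((tendsto_rpow_atTop (sub_pos.2 huv)).eventually_gt_atTop (p / q)).and
    (eventually_gt_atTop 0)).exists
  refine ⟨t, ht, ?_⟩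
  have hv : t ^ v = t ^ (v - u) * t ^ u := by rw [← rpow_add ht, sub_add_cancel]
  rw [div_lt_iff₀ hq] at hpt
  rw [hv, ← mul_assoc]
  exact mul_lt_mul_of_pos_right (by linarith) (rpow_pos_of_pos ht u)

section PowerSum

variable {f : ℝ → ℝ} {c A B r s : ℝ}

lemma iteratedDeriv_deriv_eq_of_eqOn (hf : EqOn f (fun x => c + A * x ^ r + B * x ^ s) (Ioi 0))
    (k : ℕ) {t : ℝ} (ht : 0 < t) :
    iteratedDeriv k (deriv f) t =
      A * (descPochhammer ℝ (k + 1)).eval r * t ^ (r - ↑(k + 1)) +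
        B * (descPochhammer ℝ (k + 1)).eval s * t ^ (s - ↑(k + 1)) := by
  rw [← iteratedDeriv_succ', hf.iteratedDeriv_of_isOpen isOpen_Ioi (k + 1) ht,
    iteratedDeriv_const_add_mul_rpow_add_mul_rpow k.succ_pos _ _ _ _ _ ht.ne']

lemma neg_one_pow_mul_iteratedDeriv_deriv_nonneg_of_eqOn
    (hf : EqOn f (fun x => c + A * x ^ r + B * x ^ s) (Ioi 0)) (hA : 0 ≤ A) (hB : 0 ≤ B)
    (hr : r ∈ Icc 0 1) (hs : s ∈ Icc 0 1) (k : ℕ) {t : ℝ} (ht : 0 < t) :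
    0 ≤ (-1) ^ k * iteratedDeriv k (deriv f) t := by
  have hr' := mul_nonneg hA (neg_one_pow_mul_descPochhammer_succ_eval_nonneg k hr.1 hr.2)
  have hs' := mul_nonneg hB (neg_one_pow_mul_descPochhammer_succ_eval_nonneg k hs.1 hs.2)
  rw [iteratedDeriv_deriv_eq_of_eqOn hf k ht]
  have := add_nonneg (mul_nonneg hr' (rpow_nonneg ht.le (r - ↑(k + 1))))
    (mul_nonneg hs' (rpow_nonneg ht.le (s - ↑(k + 1))))
  linarith

lemma exists_iteratedDeriv_one_deriv_pos_of_eqOn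
    (hf : EqOn f (fun x => c + A * x ^ r + B * x ^ s) (Ioi 0)) (hB : 0 < B) (hs : 1 < s)
    (hrs : r < s) : ∃ t > 0, 0 < iteratedDeriv 1 (deriv f) t := by
  obtain ⟨t, ht, hlt⟩ := exists_pos_mul_rpow_lt_mul_rpow (-(A * (r * (r - 1))))
    (q := B * (s * (s - 1))) (mul_pos hB (mul_pos (by linarith) (by linarith))) (sub_lt_sub_right hrs 2)
  have hdesc (x : ℝ) : (descPochhammer ℝ (1 + 1)).eval x = x * (x - 1) := by
    simp [descPochhammer_succ_eval]
  refine ⟨t, ht, ?_⟩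
  rw [iteratedDeriv_deriv_eq_of_eqOn hf 1 ht, hdesc, hdesc]
  norm_num
  linarith

end PowerSum

theorem szabo_bernstein_iff
    (a c₀ α : ℝ) (ha : 0 < a) (hc₀ : 0 < c₀) (hα : 0 < α) (hα1 : α < 1)
    (f : ℝ → ℝ)
    (hf : ∀ t : ℝ, 0 < t →
      f t = 1 + 2 * c₀ * a * t ^ (1 - α) / Real.Gamma (2 - α) +
        c₀ ^ 2 * a ^ 2 * t ^ (2 * (1 - α)) / Real.Gamma (3 - 2 * α)) :
    (∀ (k : ℕ) (t : ℝ), 0 < t →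
        0 ≤ (-1 : ℝ) ^ k * iteratedDeriv k (deriv f) t) ↔ 1 / 2 ≤ α := by
  set A := 2 * c₀ * a / Gamma (2 - α)
  set B := c₀ ^ 2 * a ^ 2 / Gamma (3 - 2 * α)
  have hA : 0 < A := div_pos (by positivity) (Gamma_pos_of_pos (by linarith))
  have hB : 0 < B := div_pos (by positivity) (Gamma_pos_of_pos (by linarith))
  have hf_eqOn : EqOn f (fun x => 1 + A * x ^ (1 - α) + B * x ^ (2 * (1 - α))) (Ioi 0) :=
    fun t ht => by rw [hf t ht]; ring
  constructor
  · intro hcm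
    by_contra! hα2
    obtain ⟨t, ht, hpos⟩ :=
      exists_iteratedDeriv_one_deriv_pos_of_eqOn hf_eqOn hB (by linarith) (by linarith)
    linarith [hcm 1 t ht]
  · intro hα2 k t ht
    exact neg_one_pow_mul_iteratedDeriv_deriv_nonneg_of_eqOn hf_eqOn hA.le hB.le
      ⟨by linarith, by linarith⟩ ⟨by linarith, by linarith⟩ k ht
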